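/- arXiv:2107.08271 — 2 statements merged into one kernel-verified Lean document; each statement's English description precedes it below -/
import Mathlib

section
/- In a two-group slot allocation setting where group h has value function Alg_h over sets of slots (defined as the sum over slots, assigned in decreasing click-through-rate order, of α_{j,h}·γ_h·b_i for the top bidders of group h), the group envy-cycle-elimination algorithm — which iterates over slots in decreasing click-through-rate order, swapping the two groups' current bundles J_h and J_ℓ whenever Alg_h(J_h) < β·Alg_h(J_ℓ) and Alg_ℓ(J_ℓ) < β·Alg_ℓ(J_h), and then assigning the next slot to group h if Alg_ℓ(J_ℓ) ≥ β·Alg_ℓ(J_h) and to group ℓ otherwise — produces an allocation (J_h, J_ℓ) that is group β-EFX: for each pair of groups g, g' and every item x ∈ J_{g'}, Alg_g(J_g) ≥ β·Alg_g(J_{g'} \ {x}). -/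
/-!
GECE keeps the allocation group β-EFX after every step. A swap happens only under mutual
envy, and since `β ≤ 1` each group then values its new bundle at least `β` times the other
one, so swapping keeps the invariant. Slots arrive from best to worst, and for the values
`algVal` adding a slot worse than all of `J` and then removing any slot never beats `J`: rank
by rank, the remaining slots are no better than those of `J`. So the new slot may go to a
group that the other group does not β-envy, and after the swap phase such a group exists: if
ℓ envies h, h does not envy ℓ.
-/

/-- Value obtained by a group from a set of slots `J`: slots are taken in
increasing index order (decreasing click-through rate), and the `k`-th best
slot is paired with the `k`-th highest bidder of the group:
`Alg_g(J) = Σ_{k<|J|} α_{J(k),g} · γ_g · b_{I_g(k)}`. -/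
noncomputable def algVal (α : ℕ → ℝ) (γ : ℝ) (b : ℕ → ℝ) (J : Finset ℕ) : ℝ :=
  ∑ k ∈ Finset.range J.card, α ((J.sort (· ≤ ·)).getD k 0) * γ * b k

open scoped Classical

/-- One step of the group envy-cycle-elimination algorithm on slot `j`:
swap the two bundles if the groups mutually envy each other, then give the
next slot to group `h` if group `ℓ` does not envy group `h`, else to `ℓ`. -/
noncomputable def geceStep (vh vl : Finset ℕ → ℝ) (β : ℝ)
    (p : Finset ℕ × Finset ℕ) (j : ℕ) : Finset ℕ × Finset ℕ :=
  let q := if vh p.1 < β * vh p.2 ∧ vl p.2 < β * vl p.1 then (p.2, p.1) else p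
  if β * vl q.1 ≤ vl q.2 then (insert j q.1, q.2) else (q.1, insert j q.2)

/-- The GECE algorithm: iterate over slots `0,…,n-1` in decreasing
click-through-rate order (increasing index). -/
noncomputable def gece (vh vl : Finset ℕ → ℝ) (β : ℝ) (n : ℕ) :
    Finset ℕ × Finset ℕ :=
  (List.range n).foldl (geceStep vh vl β) (∅, ∅)

open Finset

theorem List.Sublist.getElem_le_getElem_of_sortedLE {α : Type*} [Preorder α]
    {l₁ l₂ : List α} (h : l₁.Sublist l₂) (hl₂ : l₂.SortedLE) {k : ℕ} (hk : k < l₁.length) :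
    l₂[k]'(hk.trans_le h.length_le) ≤ l₁[k] := by
  obtain ⟨f, hf⟩ := List.sublist_iff_exists_orderEmbedding_getElem?_eq.mp h
  obtain ⟨_, heq⟩ :=
    List.getElem?_eq_some_iff.mp ((List.getElem?_eq_getElem hk).symm.trans (hf k)).symm
  rw [← heq]
  exact hl₂.getElem_le_getElem_of_le f.strictMono.le_apply

theorem Finset.sort_insert_of_forall_lt {α : Type*} [LinearOrder α] {s : Finset α} {a : α}
    (h : ∀ b ∈ s, b < a) : (insert a s).sort = s.sort ++ [a] := by
  refine (insert a s).sortedLT_sort.pairwise.eq_of_mem_iff ?_ fun b => ?_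
  · simpa [List.pairwise_append] using ⟨s.sortedLT_sort.pairwise, h⟩
  · simp [or_comm]

noncomputable def kth (J : Finset ℕ) (k : ℕ) : ℕ := (J.sort (· ≤ ·)).getD k 0

theorem kth_le_kth_of_subset {J' J : Finset ℕ} (h : J' ⊆ J) {k : ℕ} (hk : k < #J') :
    kth J k ≤ kth J' k := by
  have hsub : J'.sort.Sublist J.sort :=
    List.sublist_of_subperm_of_sortedLE
      (List.subperm_of_subset (J'.sort_nodup _) fun x hx => by simpa using h (by simpa using hx))
      J'.sortedLT_sort.sortedLE J.sortedLT_sort.sortedLE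
  have hk' : k < J'.sort.length := by simpa using hk
  simpa [kth, List.getD_eq_getElem?_getD, List.getElem?_eq_getElem hk',
    List.getElem?_eq_getElem (hk'.trans_le hsub.length_le)] using
    hsub.getElem_le_getElem_of_sortedLE J.sortedLT_sort.sortedLE hk'

theorem kth_insert_of_forall_lt {J : Finset ℕ} {j : ℕ} (hJ : ∀ s ∈ J, s < j) {k : ℕ}
    (hk : k < #J) : kth (insert j J) k = kth J k := by
  rw [kth, kth, sort_insert_of_forall_lt hJ, List.getD_append _ _ _ _ (by simpa using hk)]

section algVal

variable {α : ℕ → ℝ} {γ : ℝ} {b : ℕ → ℝ}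

theorem algVal_nonneg (hα0 : ∀ s, 0 ≤ α s) (hγ : 0 ≤ γ) (hb0 : ∀ i, 0 ≤ b i) (J : Finset ℕ) :
    0 ≤ algVal α γ b J :=
  sum_nonneg fun _ _ => mul_nonneg (mul_nonneg (hα0 _) hγ) (hb0 _)

theorem algVal_le_algVal_of_kth_le (hα : Antitone α) (hα0 : ∀ s, 0 ≤ α s) (hγ : 0 ≤ γ)
    (hb0 : ∀ i, 0 ≤ b i) {J' J : Finset ℕ} (hcard : #J' ≤ #J)
    (hkth : ∀ k < #J', kth J k ≤ kth J' k) : algVal α γ b J' ≤ algVal α γ b J :=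
  calc ∑ k ∈ range #J', α (kth J' k) * γ * b k
      ≤ ∑ k ∈ range #J', α (kth J k) * γ * b k :=
        sum_le_sum fun k hk => mul_le_mul_of_nonneg_right
          (mul_le_mul_of_nonneg_right (hα (hkth k (mem_range.1 hk))) hγ) (hb0 k)
    _ ≤ ∑ k ∈ range #J, α (kth J k) * γ * b k :=
        sum_le_sum_of_subset_of_nonneg (range_subset_range.2 hcard) fun _ _ _ =>
          mul_nonneg (mul_nonneg (hα0 _) hγ) (hb0 _)

end algVal

structure IsSlotValuation (v : Finset ℕ → ℝ) : Prop where
  nonneg : ∀ J, 0 ≤ v J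
  mono : Monotone v
  erase_insert_le : ∀ {m J}, J ⊆ range m → ∀ x ∈ insert m J, v ((insert m J).erase x) ≤ v J

theorem isSlotValuation_algVal {α : ℕ → ℝ} {γ : ℝ} {b : ℕ → ℝ} (hα : Antitone α)
    (hα0 : ∀ s, 0 ≤ α s) (hγ : 0 ≤ γ) (hb0 : ∀ i, 0 ≤ b i) :
    IsSlotValuation (algVal α γ b) where
  nonneg := algVal_nonneg hα0 hγ hb0
  mono _ _ h := algVal_le_algVal_of_kth_le hα hα0 hγ hb0 (card_le_card h)
    fun _ hk => kth_le_kth_of_subset h hk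
  erase_insert_le {m J} hJ x hx := by
    have hmJ : m ∉ J := fun h => by simpa using hJ h
    obtain rfl | - := mem_insert.1 hx
    · rw [erase_insert hmJ]
    have hcard : #((insert m J).erase x) = #J := by
      rw [card_erase_of_mem hx, card_insert_of_notMem hmJ, Nat.add_sub_cancel]
    refine algVal_le_algVal_of_kth_le hα hα0 hγ hb0 hcard.le fun k hk => ?_
    rw [← kth_insert_of_forall_lt (fun s hs => mem_range.1 (hJ hs)) (hcard ▸ hk)]
    exact kth_le_kth_of_subset (erase_subset _ _) hk

def IsBetaEFX (v : Finset ℕ → ℝ) (β : ℝ) (A B : Finset ℕ) : Prop :=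
  ∀ x ∈ B, β * v (B.erase x) ≤ v A

def IsGroupBetaEFX (vh vl : Finset ℕ → ℝ) (β : ℝ) (p : Finset ℕ × Finset ℕ) : Prop :=
  IsBetaEFX vh β p.1 p.2 ∧ IsBetaEFX vl β p.2 p.1

section GECE

variable {v vh vl : Finset ℕ → ℝ} {β : ℝ}

theorem IsBetaEFX.of_mul_le (hβ : 0 ≤ β) {A B B' : Finset ℕ} (h : β * v B ≤ v A)
    (hB' : ∀ x ∈ B', v (B'.erase x) ≤ v B) : IsBetaEFX v β A B' :=
  fun x hx => (mul_le_mul_of_nonneg_left (hB' x hx) hβ).trans h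

theorem IsBetaEFX.insert_left (hv : Monotone v) {A B : Finset ℕ} (h : IsBetaEFX v β A B)
    (j : ℕ) : IsBetaEFX v β (insert j A) B :=
  fun x hx => (h x hx).trans (hv (subset_insert j A))

theorem IsSlotValuation.mul_le_of_lt_mul (hv : IsSlotValuation v) (hβ1 : β ≤ 1)
    {A B : Finset ℕ} (h : v A < β * v B) : β * v A ≤ v B :=
  (mul_le_of_le_one_left (hv.nonneg A) hβ1).trans
    (h.le.trans (mul_le_of_le_one_left (hv.nonneg B) hβ1))

noncomputable def envySwap (vh vl : Finset ℕ → ℝ) (β : ℝ) (p : Finset ℕ × Finset ℕ) :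
    Finset ℕ × Finset ℕ :=
  if vh p.1 < β * vh p.2 ∧ vl p.2 < β * vl p.1 then (p.2, p.1) else p

noncomputable def giveSlot (vl : Finset ℕ → ℝ) (β : ℝ) (q : Finset ℕ × Finset ℕ) (j : ℕ) :
    Finset ℕ × Finset ℕ :=
  if β * vl q.1 ≤ vl q.2 then (insert j q.1, q.2) else (q.1, insert j q.2)

theorem geceStep_eq_giveSlot_envySwap (p : Finset ℕ × Finset ℕ) (j : ℕ) :
    geceStep vh vl β p j = giveSlot vl β (envySwap vh vl β p) j :=
  rfl

theorem envySwap_union (p : Finset ℕ × Finset ℕ) :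
    (envySwap vh vl β p).1 ∪ (envySwap vh vl β p).2 = p.1 ∪ p.2 := by
  unfold envySwap
  split_ifs
  exacts [union_comm _ _, rfl]

theorem giveSlot_union (q : Finset ℕ × Finset ℕ) (j : ℕ) :
    (giveSlot vl β q j).1 ∪ (giveSlot vl β q j).2 = insert j (q.1 ∪ q.2) := by
  unfold giveSlot
  split_ifs
  exacts [insert_union j _ _, union_insert j _ _]

theorem gece_succ (n : ℕ) :
    gece vh vl β (n + 1) = geceStep vh vl β (gece vh vl β n) n := by
  simp only [gece, List.range_succ, List.foldl_append, List.foldl_cons, List.foldl_nil]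

theorem gece_union (n : ℕ) : (gece vh vl β n).1 ∪ (gece vh vl β n).2 = range n := by
  induction n with
  | zero => rfl
  | succ n ih =>
    rw [gece_succ, geceStep_eq_giveSlot_envySwap, giveSlot_union, envySwap_union, ih,
      range_add_one]

theorem envySwap_mul_le_of_lt_mul (hvh : IsSlotValuation vh) (hβ1 : β ≤ 1)
    (p : Finset ℕ × Finset ℕ)
    (h : vl (envySwap vh vl β p).2 < β * vl (envySwap vh vl β p).1) :
    β * vh (envySwap vh vl β p).2 ≤ vh (envySwap vh vl β p).1 := by
  unfold envySwap at h ⊢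
  split_ifs at h ⊢ with hswap
  · exact hvh.mul_le_of_lt_mul hβ1 hswap.1
  · exact not_lt.1 fun h' => hswap ⟨h', h⟩

theorem IsGroupBetaEFX.envySwap (hvh : IsSlotValuation vh) (hvl : IsSlotValuation vl)
    (hβ0 : 0 ≤ β) (hβ1 : β ≤ 1) {p : Finset ℕ × Finset ℕ} (hp : IsGroupBetaEFX vh vl β p) :
    IsGroupBetaEFX vh vl β (envySwap vh vl β p) := by
  unfold _root_.envySwap
  split_ifs with hswap
  · exact ⟨.of_mul_le hβ0 (hvh.mul_le_of_lt_mul hβ1 hswap.1) fun x _ => hvh.mono (erase_subset x _),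
      .of_mul_le hβ0 (hvl.mul_le_of_lt_mul hβ1 hswap.2) fun x _ => hvl.mono (erase_subset x _)⟩
  · exact hp

theorem IsGroupBetaEFX.giveSlot (hvh : IsSlotValuation vh) (hvl : IsSlotValuation vl)
    (hβ0 : 0 ≤ β) {q : Finset ℕ × Finset ℕ} {m : ℕ} (hq : IsGroupBetaEFX vh vl β q)
    (hq_envy : vl q.2 < β * vl q.1 → β * vh q.2 ≤ vh q.1) (hsub : q.1 ∪ q.2 ⊆ range m) :
    IsGroupBetaEFX vh vl β (giveSlot vl β q m) := by
  unfold _root_.giveSlot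
  split_ifs with h
  · exact ⟨hq.1.insert_left hvh.mono m,
      .of_mul_le hβ0 h (hvl.erase_insert_le (subset_union_left.trans hsub))⟩
  · exact ⟨.of_mul_le hβ0 (hq_envy (not_le.1 h))
        (hvh.erase_insert_le (subset_union_right.trans hsub)),
      hq.2.insert_left hvl.mono m⟩

theorem isGroupBetaEFX_gece (hvh : IsSlotValuation vh) (hvl : IsSlotValuation vl)
    (hβ0 : 0 ≤ β) (hβ1 : β ≤ 1) (n : ℕ) : IsGroupBetaEFX vh vl β (gece vh vl β n) := by
  induction n with
  | zero => exact ⟨fun x hx => absurd hx (notMem_empty x), fun x hx => absurd hx (notMem_empty x)⟩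
  | succ n ih =>
    rw [gece_succ, geceStep_eq_giveSlot_envySwap]
    exact (ih.envySwap hvh hvl hβ0 hβ1).giveSlot hvh hvl hβ0
      (envySwap_mul_le_of_lt_mul hvh hβ1 _) ((envySwap_union _).trans (gece_union n)).le

end GECE

theorem gece_group_beta_EFX_general
    (αh αl : ℕ → ℝ) (γh γl : ℝ) (bh bl : ℕ → ℝ) (β : ℝ) (n : ℕ)
    (Jh Jl : Finset ℕ)
    (hαh : ∀ s t, s ≤ t → αh t ≤ αh s) (hαl : ∀ s t, s ≤ t → αl t ≤ αl s)
    (hαh0 : ∀ s, 0 ≤ αh s) (hαl0 : ∀ s, 0 ≤ αl s)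
    (hγh : γh ∈ Set.Icc (0 : ℝ) 1) (hγl : γl ∈ Set.Icc (0 : ℝ) 1)
    (hbh0 : ∀ i, 0 ≤ bh i) (hbl0 : ∀ i, 0 ≤ bl i)
    (hβ0 : 0 < β) (hβ1 : β ≤ 1)
    (hJ : (Jh, Jl) = gece (algVal αh γh bh) (algVal αl γl bl) β n) :
    (∀ x ∈ Jl, β * algVal αh γh bh (Jl.erase x) ≤ algVal αh γh bh Jh) ∧
    (∀ x ∈ Jh, β * algVal αl γl bl (Jh.erase x) ≤ algVal αl γl bl Jl) := by
  have hvh := isSlotValuation_algVal (fun s t => hαh s t) hαh0 hγh.1 hbh0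
  have hvl := isSlotValuation_algVal (fun s t => hαl s t) hαl0 hγl.1 hbl0
  have hEFX := isGroupBetaEFX_gece hvh hvl hβ0.le hβ1 n
  rw [← hJ] at hEFX
  exact hEFX

/-- The allocation `(J_h, J_ℓ)` computed by GECE is group β-EFX: for each
group and every item `x` in the other group's bundle,
`Alg_g(J_g) ≥ β · Alg_g(J_{g'} \ {x})`. -/
theorem gece_group_beta_EFX
    (αh αl : ℕ → ℝ) (γh γl : ℝ) (bh bl : ℕ → ℝ) (β : ℝ) (n : ℕ)
    (Jh Jl : Finset ℕ)
    (hαh : ∀ s t, s ≤ t → αh t ≤ αh s) (hαl : ∀ s t, s ≤ t → αl t ≤ αl s)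
    (hαh0 : ∀ s, 0 ≤ αh s) (hαl0 : ∀ s, 0 ≤ αl s)
    (hγh : γh ∈ Set.Icc (0 : ℝ) 1) (hγl : γl ∈ Set.Icc (0 : ℝ) 1)
    (hbh0 : ∀ i, 0 ≤ bh i) (hbl0 : ∀ i, 0 ≤ bl i)
    (hbh : ∀ i j, i ≤ j → bh j ≤ bh i) (hbl : ∀ i j, i ≤ j → bl j ≤ bl i)
    (hβ0 : 0 < β) (hβ1 : β ≤ 1)
    (hJ : (Jh, Jl) = gece (algVal αh γh bh) (algVal αl γl bl) β n) :
    (∀ x ∈ Jl, β * algVal αh γh bh (Jl.erase x) ≤ algVal αh γh bh Jh) ∧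
    (∀ x ∈ Jh, β * algVal αl γl bl (Jh.erase x) ≤ algVal αl γl bl Jl) :=
  gece_group_beta_EFX_general αh αl γh γl bh bl β n Jh Jl hαh hαl hαh0 hαl0 hγh hγl hbh0 hbl0 hβ0
    hβ1 hJ
end

section
/- If a composite mechanism C is (λ, μ)-semi-smooth with respect to GSP, then at every Bayesian coarse correlated equilibrium σ of the composite mechanism, E_{v,γ,b∼σ}[SW^C(b, v, γ)] ≥ (λ/(1+μ))·E_{v,γ}[SW^G(v, γ)]; in particular the price of composition is at least λ/(1+μ). -/
/-!
STATEMENT 17: If a composite mechanism C is (λ, μ)-semi-smooth with respect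
to GSP, then at every Bayesian coarse correlated equilibrium σ,
E[SW^C(b, v, γ)] ≥ (λ/(1+μ))·E[SW^G(v, γ)].

Model: σ is represented by a finite outcome space Ω with probability weights
μP, carrying the joint realization of the bid profile B ω, the valuation
profile V ω and the quality factors Q ω. The BCCE condition says that no
player can gain in expectation by a unilateral deviation that is a function
of their own type.
-/

theorem semismooth_implies_price_of_composition
    (n : ℕ) (Ω Γ : Type*) [Fintype Ω]
    (μP : Ω → ℝ) (hμ0 : ∀ ω, 0 ≤ μP ω) (hμ1 : ∑ ω, μP ω = 1)
    (B V : Ω → Fin n → ℝ) (Q : Ω → Γ)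
    (uC : Fin n → (Fin n → ℝ) → (Fin n → ℝ) → Γ → ℝ)
    (SWC : (Fin n → ℝ) → (Fin n → ℝ) → Γ → ℝ)
    (SWG : (Fin n → ℝ) → Γ → ℝ)
    (lam mu : ℝ) (hlam : 0 ≤ lam) (hmu : 0 ≤ mu)
    -- the independent deviation profile witnessing semi-smoothness: each
    -- bidder deviates to the bid `d i` of its own realized type
    (d : Fin n → ℝ → ℝ)
    -- (λ, μ)-semi-smoothness of the composite mechanism w.r.t. GSP
    (hsmooth : ∀ (bb vv : Fin n → ℝ) (g : Γ),
      lam * SWG vv g - mu * SWC bb vv g ≤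
        ∑ i, uC i (Function.update bb i (d i (vv i))) vv g)
    -- σ is a Bayesian coarse correlated equilibrium: no player gains in
    -- expectation from any unilateral type-measurable constant-bid deviation
    (hBCCE : ∀ (i : Fin n) (f : ℝ → ℝ),
      ∑ ω, μP ω * uC i (Function.update (B ω) i (f (V ω i))) (V ω) (Q ω) ≤
        ∑ ω, μP ω * uC i (B ω) (V ω) (Q ω))
    -- individual rationality: the social welfare dominates the total utility
    (hIR : ∀ ω, ∑ i, uC i (B ω) (V ω) (Q ω) ≤ SWC (B ω) (V ω) (Q ω)) :
    (lam / (1 + mu)) * ∑ ω, μP ω * SWG (V ω) (Q ω) ≤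
      ∑ ω, μP ω * SWC (B ω) (V ω) (Q ω) := by
  have h1mu : (0:ℝ) < 1 + mu := by linarith
  -- key chain
  have key : lam * ∑ ω, μP ω * SWG (V ω) (Q ω)
      - mu * ∑ ω, μP ω * SWC (B ω) (V ω) (Q ω)
      ≤ ∑ ω, μP ω * SWC (B ω) (V ω) (Q ω) := by
    have step1 : lam * ∑ ω, μP ω * SWG (V ω) (Q ω)
        - mu * ∑ ω, μP ω * SWC (B ω) (V ω) (Q ω)
        ≤ ∑ ω, μP ω * ∑ i, uC i (Function.update (B ω) i (d i (V ω i))) (V ω) (Q ω) := by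
      rw [Finset.mul_sum, Finset.mul_sum, ← Finset.sum_sub_distrib]
      apply Finset.sum_le_sum
      intro ω _
      have := hsmooth (B ω) (V ω) (Q ω)
      have h := mul_le_mul_of_nonneg_left this (hμ0 ω)
      calc lam * (μP ω * SWG (V ω) (Q ω)) - mu * (μP ω * SWC (B ω) (V ω) (Q ω))
          = μP ω * (lam * SWG (V ω) (Q ω) - mu * SWC (B ω) (V ω) (Q ω)) := by ring
        _ ≤ _ := h
    have step2 : ∑ ω, μP ω * ∑ i, uC i (Function.update (B ω) i (d i (V ω i))) (V ω) (Q ω)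
        ≤ ∑ ω, μP ω * ∑ i, uC i (B ω) (V ω) (Q ω) := by
      simp only [Finset.mul_sum]
      rw [Finset.sum_comm]
      conv_rhs => rw [Finset.sum_comm]
      exact Finset.sum_le_sum fun i _ => hBCCE i (d i)
    have step3 : ∑ ω, μP ω * ∑ i, uC i (B ω) (V ω) (Q ω)
        ≤ ∑ ω, μP ω * SWC (B ω) (V ω) (Q ω) :=
      Finset.sum_le_sum fun ω _ => mul_le_mul_of_nonneg_left (hIR ω) (hμ0 ω)
    linarith
  rw [div_mul_eq_mul_div, div_le_iff₀ h1mu]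
  nlinarith [key]
end
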